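/- For 0 < r < 1 define B(r) := −4r ∫₀^∞ [ (1 + log(1−r²) − log(1 + r² + 2r·cosh u)) / ((1 + r e^u)² (1 + r e^{−u})²) ] · ( r + ((1+r²)/2)·cosh u ) du. Then lim_{r→0⁺} B(r) = 0. -/

import Mathlib

/-!
The integral has an elementary antiderivative. Writing
`1 + r² + 2r cosh u = (1 + r e^u)(1 + r e^{-u})`, the integrand is a rational function of
`e^{-u}` and of the logarithms of these two factors, and integrating from `0` to `∞` gives the
closed form `B(r) = -log(1 - r²) - 2r² log r / (1 - r²)`. Both terms tend to `0` as `r → 0⁺`,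
the second because `r log r → 0`. Integrability of the integrand comes from the bound
`O((1 + u) e^{-u})` for fixed `r`.
-/

open MeasureTheory Filter

/-- The integral representation `B(r)` of the coefficient function in the elliptic
expansion of the derivative of the automorphic Green's function. -/
noncomputable def Bfun (r : ℝ) : ℝ :=
  -4 * r * ∫ u in Set.Ioi (0 : ℝ),
    ((1 + Real.log (1 - r ^ 2) - Real.log (1 + r ^ 2 + 2 * r * Real.cosh u)) /
        ((1 + r * Real.exp u) ^ 2 * (1 + r * Real.exp (-u)) ^ 2)) *
      (r + ((1 + r ^ 2) / 2) * Real.cosh u)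

open Real Set Topology

lemma one_add_sq_add_mul_cosh_eq {r : ℝ} (hr : r ≠ 0) (u : ℝ) :
    1 + r ^ 2 + 2 * r * cosh u = r * exp u * (1 + r⁻¹ * exp (-u)) * (1 + r * exp (-u)) := by
  rw [cosh_eq, exp_neg]
  field_simp
  ring

lemma tendsto_log_one_add_mul_exp_neg_atTop (c : ℝ) :
    Tendsto (fun u => log (1 + c * exp (-u))) atTop (𝓝 0) := by
  have h : Tendsto (fun u => 1 + c * exp (-u)) atTop (𝓝 1) := by
    simpa using (tendsto_exp_neg_atTop_nhds_zero.const_mul c).const_add 1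
  simpa using h.log one_ne_zero

namespace Bfun

variable {r : ℝ}

noncomputable def integrand (r u : ℝ) : ℝ :=
  ((1 + log (1 - r ^ 2) - log (1 + r ^ 2 + 2 * r * cosh u)) /
      ((1 + r * exp u) ^ 2 * (1 + r * exp (-u)) ^ 2)) *
    (r + ((1 + r ^ 2) / 2) * cosh u)

lemma eq_integral (r : ℝ) : Bfun r = -4 * r * ∫ u in Ioi (0 : ℝ), integrand r u := rfl

/-- Written with `r * (r * log r)` so that continuity at `0` (where `log 0 = 0`) comes from
that of `x * log x`. -/
noncomputable def closedForm (r : ℝ) : ℝ := -log (1 - r ^ 2) - 2 * r * (r * log r) / (1 - r ^ 2)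

/-- An antiderivative of `4 r · integrand r`, written in the variable `e^{-u}` so that its limit
`0` at `+∞` is read off term by term. -/
noncomputable def primitive (r u : ℝ) : ℝ :=
  (u + log r + log (1 + r⁻¹ * exp (-u)) + log (1 + r * exp (-u)) - log (1 - r ^ 2)) *
      exp (-u) * ((r + exp (-u))⁻¹ + r * (1 + r * exp (-u))⁻¹)
    + (2 * r ^ 2 * log (1 + r⁻¹ * exp (-u)) - 2 * log (1 + r * exp (-u))) / (1 - r ^ 2)

lemma hasDerivAt_primitive (hr : 0 < r) (hr1 : r < 1) (u : ℝ) :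
    HasDerivAt (primitive r) (4 * r * integrand r u) u := by
  have hdx : HasDerivAt (fun u => exp (-u)) (-exp (-u)) u := by
    simpa using (hasDerivAt_neg u).exp
  have hexp_neg := exp_pos (-u)
  have hpos₁ : 0 < 1 + r⁻¹ * exp (-u) := by positivity
  have hpos₂ : 0 < 1 + r * exp (-u) := by positivity
  have hc := ((hdx.const_mul r⁻¹).const_add 1).log hpos₁.ne'
  have hb := ((hdx.const_mul r).const_add 1).log hpos₂.ne'
  have hQ := ((hdx.const_add r).inv (by positivity)).add
    ((((hdx.const_mul r).const_add 1).inv hpos₂.ne').const_mul r)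
  have hL := ((((((hasDerivAt_id u).add_const (log r)).add hc).add hb).sub_const
    (log (1 - r ^ 2))).mul hdx).mul hQ
  have hR := ((hc.const_mul (2 * r ^ 2)).sub (hb.const_mul 2)).div_const (1 - r ^ 2)
  refine (hL.add hR).congr_deriv ?_
  have hr2 : 1 - r ^ 2 ≠ 0 := by nlinarith
  simp only [Pi.add_apply, Pi.mul_apply, Pi.inv_apply, id]
  unfold integrand
  rw [one_add_sq_add_mul_cosh_eq hr.ne', log_mul (by positivity) hpos₂.ne',
    log_mul (by positivity) hpos₁.ne', log_mul hr.ne' (exp_pos u).ne', log_exp, cosh_eq]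
  have hexp := exp_pos u
  rw [exp_neg] at hpos₁ hpos₂ ⊢
  field_simp
  ring

lemma primitive_zero (hr : 0 < r) (hr1 : r < 1) : primitive r 0 = closedForm r := by
  have hr2 : 1 - r ^ 2 ≠ 0 := by nlinarith
  have hc : 1 + r⁻¹ = (1 + r) / r := by field_simp; ring
  simp only [primitive, closedForm, neg_zero, exp_zero, mul_one]
  rw [hc, log_div (by positivity) hr.ne']
  field_simp
  ring

lemma tendsto_primitive_atTop (hr : 0 < r) : Tendsto (primitive r) atTop (𝓝 0) := by
  have hx := tendsto_exp_neg_atTop_nhds_zero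
  have hux : Tendsto (fun u => u * exp (-u)) atTop (𝓝 0) := by
    simpa using tendsto_pow_mul_exp_neg_atTop_nhds_zero 1
  have hc := tendsto_log_one_add_mul_exp_neg_atTop r⁻¹
  have hb := tendsto_log_one_add_mul_exp_neg_atTop r
  have hQ : Tendsto (fun u => (r + exp (-u))⁻¹ + r * (1 + r * exp (-u))⁻¹) atTop
      (𝓝 ((r + 0)⁻¹ + r * (1 + r * 0)⁻¹)) :=
    ((hx.const_add r).inv₀ (by simpa using hr.ne')).add
      ((((hx.const_mul r).const_add 1).inv₀ (by simp)).const_mul r)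
  have hlim := ((hux.add ((((tendsto_const_nhds (x := log r)).add hc).add hb).sub
    (tendsto_const_nhds (x := log (1 - r ^ 2))) |>.mul hx)).mul hQ).add
    (((hc.const_mul (2 * r ^ 2)).sub (hb.const_mul 2)).div_const (1 - r ^ 2))
  simp only [mul_zero, add_zero, sub_self, zero_div, zero_mul] at hlim
  refine hlim.congr fun u => ?_
  rw [primitive]
  ring

lemma abs_integrand_le (hr : 0 < r) (hr1 : r < 1) {u : ℝ} (hu : 0 ≤ u) :
    |integrand r u| ≤ 2 / r ^ 2 * ((1 - log (1 - r ^ 2) + log 4 + u) * exp (-u)) := by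
  have he : 1 ≤ exp u := one_le_exp hu
  have hcosh : cosh u ≤ exp u := by rw [cosh_eq]; linarith [exp_le_one_iff.2 (neg_nonpos.2 hu)]
  have hcosh₀ := cosh_pos u
  have hL : log (1 - r ^ 2) ≤ 0 := log_nonpos (by nlinarith) (by nlinarith)
  have hA₀ : 0 ≤ log (1 + r ^ 2 + 2 * r * cosh u) := log_nonneg (by nlinarith)
  have hA : log (1 + r ^ 2 + 2 * r * cosh u) ≤ log 4 + u := by
    calc _ ≤ log (4 * exp u) := log_le_log (by positivity) (by nlinarith)
      _ = log 4 + u := by rw [log_mul (by norm_num) (exp_pos u).ne', log_exp]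
  have hnum : |1 + log (1 - r ^ 2) - log (1 + r ^ 2 + 2 * r * cosh u)|
      ≤ 1 - log (1 - r ^ 2) + log 4 + u := by
    rw [abs_le]; constructor <;> linarith
  have hden : r ^ 2 * exp u ^ 2 ≤ (1 + r * exp u) ^ 2 * (1 + r * exp (-u)) ^ 2 := by
    have h₁ : (r * exp u) ^ 2 ≤ (1 + r * exp u) ^ 2 := by gcongr; linarith
    have h₂ : 1 ≤ (1 + r * exp (-u)) ^ 2 := one_le_pow₀ (by have := exp_pos (-u); nlinarith)
    nlinarith [sq_nonneg (r * exp u)]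
  have hfac : r + ((1 + r ^ 2) / 2) * cosh u ≤ 2 * exp u := by
    have : ((1 + r ^ 2) / 2) * cosh u ≤ 1 * cosh u := by gcongr; nlinarith
    linarith
  have hden₀ : 0 < (1 + r * exp u) ^ 2 * (1 + r * exp (-u)) ^ 2 := by positivity
  have hfac₀ : 0 < r + ((1 + r ^ 2) / 2) * cosh u := by positivity
  rw [integrand, abs_mul, abs_div, abs_of_pos hden₀, abs_of_pos hfac₀]
  have hC : 0 ≤ 1 - log (1 - r ^ 2) + log 4 + u := by
    linarith [log_nonneg (by norm_num : (1 : ℝ) ≤ 4)]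
  calc _ ≤ (1 - log (1 - r ^ 2) + log 4 + u) / (r ^ 2 * exp u ^ 2) * (2 * exp u) := by
        gcongr
    _ = _ := by rw [exp_neg]; field_simp

lemma integrableOn_integrand (hr : 0 < r) (hr1 : r < 1) : IntegrableOn (integrand r) (Ioi 0) := by
  have hdom : IntegrableOn (fun u => 2 / r ^ 2 * ((1 - log (1 - r ^ 2) + log 4 + u) * exp (-u)))
      (Ioi 0) := by
    refine Integrable.const_mul (IntegrableOn.congr_fun
      (((exp_neg_integrableOn_Ioi 0 one_pos).const_mul (1 - log (1 - r ^ 2) + log 4)).add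
        (GammaIntegral_convergent two_pos)) (fun u _ => ?_) measurableSet_Ioi) _
    norm_num
    ring
  refine hdom.mono' (by unfold integrand; fun_prop) ?_
  filter_upwards [ae_restrict_mem measurableSet_Ioi] with u hu
  exact abs_integrand_le hr hr1 (le_of_lt hu)

lemma eq_closedForm (hr : 0 < r) (hr1 : r < 1) : Bfun r = closedForm r := by
  have h := integral_Ioi_of_hasDerivAt_of_tendsto' (fun u _ => hasDerivAt_primitive hr hr1 u)
    ((integrableOn_integrand hr hr1).const_mul (4 * r)) (tendsto_primitive_atTop hr)
  rw [integral_const_mul, primitive_zero hr hr1] at h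
  rw [eq_integral]
  linear_combination -h

lemma continuousAt_closedForm : ContinuousAt closedForm 0 := by
  have hden : ContinuousAt (fun r : ℝ => 1 - r ^ 2) 0 := by fun_prop
  exact (hden.log (by norm_num)).neg.sub
    (((continuous_const_mul 2).mul continuous_mul_log).continuousAt.div hden (by norm_num))

lemma closedForm_zero : closedForm 0 = 0 := by simp [closedForm]

end Bfun

/-- `lim_{r→0⁺} B(r) = 0`. -/
theorem B_tendsto_zero :
    Tendsto Bfun (nhdsWithin 0 (Set.Ioi 0)) (nhds 0) := by
  have h := (Bfun.continuousAt_closedForm.continuousWithinAt (s := Ioi 0)).tendsto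
  rw [Bfun.closedForm_zero] at h
  refine h.congr' ?_
  filter_upwards [Ioo_mem_nhdsGT one_pos] with r hr
  exact (Bfun.eq_closedForm hr.1 hr.2).symm
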